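/- The function R̃(x) := Σ_{j ≥ 1} (1 - jx e^{-jx} - e^{-2jx})/(j³(1 + e^{-jx})²) is strictly increasing on (0, ∞), with derivative R̃′(x) = Σ_{j ≥ 1} e^{-jx}(1 + e^{-jx} + jx(1 - e^{-jx}))/(j²(1 + e^{-jx})³) > 0 for x > 0. -/

import Mathlib

/-- `R̃(x) := Σ_{j ≥ 1} (1 - jx e^{-jx} - e^{-2jx})/(j³(1 + e^{-jx})²)`. -/
noncomputable def Rtilde (x : ℝ) : ℝ :=
  ∑' j : ℕ+,
    (1 - (j : ℝ) * x * Real.exp (-(j : ℝ) * x) - Real.exp (-2 * (j : ℝ) * x)) /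
      ((j : ℝ) ^ 3 * (1 + Real.exp (-(j : ℝ) * x)) ^ 2)

noncomputable def Rterm (j : ℕ+) (x : ℝ) : ℝ :=
  (1 - (j : ℝ) * x * Real.exp (-(j : ℝ) * x) - Real.exp (-2 * (j : ℝ) * x)) /
    ((j : ℝ) ^ 3 * (1 + Real.exp (-(j : ℝ) * x)) ^ 2)

noncomputable def Rterm' (j : ℕ+) (x : ℝ) : ℝ :=
  Real.exp (-(j : ℝ) * x) *
    (1 + Real.exp (-(j : ℝ) * x) + (j : ℝ) * x * (1 - Real.exp (-(j : ℝ) * x))) /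
  ((j : ℝ) ^ 2 * (1 + Real.exp (-(j : ℝ) * x)) ^ 3)

lemma Rterm_hasDerivAt (j : ℕ+) (x : ℝ) : HasDerivAt (Rterm j) (Rterm' j x) x := by
  set a : ℝ := (j : ℝ) with ha
  have hapos : (0:ℝ) < a := by rw [ha]; exact_mod_cast j.pos
  have h1 : HasDerivAt (fun y : ℝ => -a * y) (-a) x := by
    simpa using (hasDerivAt_id x).const_mul (-a)
  have hE : HasDerivAt (fun y : ℝ => Real.exp (-a * y)) (Real.exp (-a * x) * -a) x := h1.exp
  have h2 : HasDerivAt (fun y : ℝ => -2 * a * y) (-2 * a) x := by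
    simpa using (hasDerivAt_id x).const_mul (-2 * a)
  have hE2 : HasDerivAt (fun y : ℝ => Real.exp (-2 * a * y)) (Real.exp (-2 * a * x) * (-2 * a)) x := h2.exp
  have hay : HasDerivAt (fun y : ℝ => a * y) a x := by
    simpa using (hasDerivAt_id x).const_mul a
  have hN : HasDerivAt (fun y : ℝ => 1 - a * y * Real.exp (-a * y) - Real.exp (-2 * a * y))
      (0 - (a * Real.exp (-a * x) + a * x * (Real.exp (-a * x) * -a))
        - Real.exp (-2 * a * x) * (-2 * a)) x :=
    ((hasDerivAt_const x (1:ℝ)).sub (hay.mul hE)).sub hE2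
  have hD : HasDerivAt (fun y : ℝ => a ^ 3 * (1 + Real.exp (-a * y)) ^ 2)
      (a ^ 3 * ((2:ℕ) * (1 + Real.exp (-a * x)) ^ 1 * (0 + Real.exp (-a * x) * -a))) x := by
    exact (((hasDerivAt_const x (1:ℝ)).add hE).pow 2).const_mul (a ^ 3)
  have hEpos : 0 < Real.exp (-a * x) := Real.exp_pos _
  have hne : a ^ 3 * (1 + Real.exp (-a * x)) ^ 2 ≠ 0 := by positivity
  have := hN.div hD hne
  convert this using 1
  · rfl
  · rfl
  · rfl
  have hsq : Real.exp (-2 * a * x) = Real.exp (-a * x) ^ 2 := by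
    rw [← Real.exp_nat_mul]; ring_nf
  rw [Rterm', hsq]
  set E := Real.exp (-a * x)
  have h1E : (0:ℝ) < 1 + E := by positivity
  field_simp
  ring

lemma Rterm'_bound (j : ℕ+) (x : ℝ) (hx : 0 < x) : ‖Rterm' j x‖ ≤ 3 / (j : ℝ) ^ 2 := by
  set a : ℝ := (j : ℝ) with ha
  have ha1 : (1:ℝ) ≤ a := by rw [ha]; exact_mod_cast j.one_le
  have hapos : (0:ℝ) < a := lt_of_lt_of_le one_pos ha1
  set E := Real.exp (-a * x) with hE
  have hEpos : 0 < E := Real.exp_pos _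
  have hE1 : E ≤ 1 := by
    rw [hE]; apply Real.exp_le_one_iff.mpr; nlinarith
  have h1E : (1:ℝ) ≤ 1 + E := by linarith
  have hax : 0 ≤ a * x := le_of_lt (mul_pos hapos hx)
  have hnum_nonneg : 0 ≤ E * (1 + E + a * x * (1 - E)) := by nlinarith [mul_nonneg hax (by linarith : (0:ℝ) ≤ 1 - E)]
  have hkey : E * (2 + a * x) ≤ 2 := by
    have h := Real.add_one_le_exp (a * x)
    have hEeq : E = (Real.exp (a * x))⁻¹ := by
      rw [hE, ← Real.exp_neg]; ring_nf
    have hexp_pos : 0 < Real.exp (a * x) := Real.exp_pos _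
    rw [hEeq, inv_mul_le_iff₀ hexp_pos]
    nlinarith
  have hnum : E * (1 + E + a * x * (1 - E)) ≤ 2 := by nlinarith
  rw [Rterm', ← ha, ← hE, Real.norm_eq_abs, abs_div]
  have hden : 0 < a ^ 2 * (1 + E) ^ 3 := by positivity
  rw [abs_of_nonneg hnum_nonneg, abs_of_pos hden]
  rw [div_le_div_iff₀ hden (by positivity)]
  have h1E3 : 1 ≤ (1 + E) ^ 3 := by nlinarith [sq_nonneg E, pow_pos hEpos 3, mul_pos hEpos hEpos]
  nlinarith [sq_nonneg a, hnum, hden]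

lemma Rterm_bound (j : ℕ+) (x : ℝ) (hx : 0 < x) : ‖Rterm j x‖ ≤ 3 / (j : ℝ) ^ 3 := by
  set a : ℝ := (j : ℝ) with ha
  have ha1 : (1:ℝ) ≤ a := by rw [ha]; exact_mod_cast j.one_le
  have hapos : (0:ℝ) < a := lt_of_lt_of_le one_pos ha1
  set E := Real.exp (-a * x) with hE
  have hEpos : 0 < E := Real.exp_pos _
  have hE1 : E ≤ 1 := by
    rw [hE]; apply Real.exp_le_one_iff.mpr; nlinarith
  have hE2 : Real.exp (-2 * a * x) = E ^ 2 := by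
    rw [hE, ← Real.exp_nat_mul]; ring_nf
  have haxE : a * x * E ≤ 1 := by
    have h := Real.add_one_le_exp (a * x)
    have hEeq : E = (Real.exp (a * x))⁻¹ := by rw [hE, ← Real.exp_neg]; ring_nf
    have hexp_pos : 0 < Real.exp (a * x) := Real.exp_pos _
    rw [hEeq, mul_inv_le_iff₀ hexp_pos]
    nlinarith
  rw [Rterm, ← ha, ← hE, hE2, Real.norm_eq_abs, abs_div]
  have hden : 0 < a ^ 3 * (1 + E) ^ 2 := by positivity
  rw [abs_of_pos hden, div_le_div_iff₀ hden (by positivity)]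
  have habs : |1 - a * x * E - E ^ 2| ≤ 3 := by
    rw [abs_le]
    constructor <;> nlinarith [mul_pos (mul_pos hapos hx) hEpos]
  have h1E2 : 1 ≤ (1 + E) ^ 2 := by nlinarith [sq_nonneg E]
  have ha3 : 0 < a ^ 3 := by positivity
  nlinarith [mul_le_mul_of_nonneg_left h1E2 (le_of_lt ha3)]

lemma summable_bound : Summable (fun j : ℕ+ => 3 / (j : ℝ) ^ 2) := by
  have h : Summable (fun n : ℕ => 3 / (n : ℝ) ^ 2) := by
    simpa [div_eq_mul_inv] using (Real.summable_one_div_nat_pow.mpr one_lt_two).mul_left 3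
  exact h.comp_injective (fun a b hab => by exact_mod_cast PNat.coe_injective (by exact_mod_cast hab))

lemma Rterm'_pos (j : ℕ+) (x : ℝ) (hx : 0 < x) : 0 < Rterm' j x := by
  set a : ℝ := (j : ℝ) with ha
  have ha1 : (1:ℝ) ≤ a := by rw [ha]; exact_mod_cast j.one_le
  have hapos : (0:ℝ) < a := lt_of_lt_of_le one_pos ha1
  set E := Real.exp (-a * x) with hE
  have hEpos : 0 < E := Real.exp_pos _
  have hE1 : E ≤ 1 := by rw [hE]; apply Real.exp_le_one_iff.mpr; nlinarith
  have hax : 0 ≤ a * x := le_of_lt (mul_pos hapos hx)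
  rw [Rterm', ← ha, ← hE]
  apply div_pos
  · nlinarith [mul_nonneg hax (by linarith : (0:ℝ) ≤ 1 - E)]
  · positivity

lemma summable_Rterm' (x : ℝ) (hx : 0 < x) : Summable (fun j : ℕ+ => Rterm' j x) :=
  Summable.of_norm_bounded summable_bound (fun j => Rterm'_bound j x hx)

lemma summable_Rterm (x : ℝ) (hx : 0 < x) : Summable (fun j : ℕ+ => Rterm j x) := by
  apply Summable.of_norm_bounded summable_bound
  intro j
  refine (Rterm_bound j x hx).trans ?_
  have hj : (1:ℝ) ≤ (j : ℝ) := by exact_mod_cast j.one_le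
  apply div_le_div_of_nonneg_left (by norm_num) (by positivity)
  nlinarith

lemma Rtilde_hasDerivAt (x : ℝ) (hx : 0 < x) :
    HasDerivAt Rtilde (∑' j : ℕ+, Rterm' j x) x := by
  have : HasDerivAt (fun y => ∑' j : ℕ+, Rterm j y) (∑' j : ℕ+, Rterm' j x) x :=
    hasDerivAt_tsum_of_isPreconnected summable_bound isOpen_Ioi
      (convex_Ioi (0:ℝ)).isPreconnected
      (fun j y _ => Rterm_hasDerivAt j y)
      (fun j y hy => Rterm'_bound j y hy)
      (Set.mem_Ioi.mpr hx) (summable_Rterm x hx) (Set.mem_Ioi.mpr hx)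
  exact this

/-- `R̃` is strictly increasing on `(0, ∞)`. -/
theorem Rtilde_strictMono :
    StrictMonoOn Rtilde (Set.Ioi 0) ∧
    ∀ x : ℝ, 0 < x →
      deriv Rtilde x =
        (∑' j : ℕ+,
          Real.exp (-(j : ℝ) * x) *
            (1 + Real.exp (-(j : ℝ) * x) + (j : ℝ) * x * (1 - Real.exp (-(j : ℝ) * x))) /
          ((j : ℝ) ^ 2 * (1 + Real.exp (-(j : ℝ) * x)) ^ 3)) ∧
      0 < deriv Rtilde x := by
  have hderiv : ∀ x : ℝ, 0 < x → deriv Rtilde x = ∑' j : ℕ+, Rterm' j x :=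
    fun x hx => (Rtilde_hasDerivAt x hx).deriv
  have hpos : ∀ x : ℝ, 0 < x → 0 < deriv Rtilde x := by
    intro x hx
    rw [hderiv x hx]
    exact Summable.tsum_pos (summable_Rterm' x hx) (fun j => (Rterm'_pos j x hx).le) 1 (Rterm'_pos 1 x hx)
  refine ⟨?_, fun x hx => ⟨hderiv x hx, hpos x hx⟩⟩
  apply strictMonoOn_of_deriv_pos (convex_Ioi 0)
  · exact fun x hx => (Rtilde_hasDerivAt x hx).continuousAt.continuousWithinAt
  · intro x hx
    rw [interior_Ioi] at hx
    exact hpos x hx
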